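/- Let R be twice continuously differentiable and (L₀, L₁)-smooth with L₀ > 0, L₁ > 0, let λ ∈ (0,1), and let θ ∈ ℝ^N with ∇R(θ) ≠ 0. Define η̃ = (1/(L₁‖∇R(θ)‖))·ln((L₀ + L₁(2−λ)‖∇R(θ)‖)/(L₀ + L₁‖∇R(θ)‖)). Then for every η with 0 < η ≤ η̃, the Armijo condition R(θ − η∇R(θ)) − R(θ) ≤ −λ·η·‖∇R(θ)‖² holds. -/

import Mathlib

/-!
Write `g = ∇R(θ)`. Along the ray `t ↦ θ - t • g`, the deviation `∇R(θ - t • g) - g` has derivative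
of norm at most `‖g‖ (L₀ + L₁ ‖∇R‖) ≤ L₁ ‖g‖ ‖∇R(θ - t • g) - g‖ + ‖g‖ (L₀ + L₁ ‖g‖)`, so Grönwall's
inequality bounds it by `(L₀ + L₁ ‖g‖) / L₁ · (exp (L₁ ‖g‖ t) - 1)`. The step size `η̃` is exactly
where this bound reaches `(1 - λ) ‖g‖`; up to `η̃` the slope `-⟪∇R(θ - t • g), g⟫` of `R` along the
ray therefore stays below `-λ ‖g‖²`, and integrating gives the Armijo condition.
-/

open Real Set InnerProductSpace
open scoped RealInnerProductSpace

section Ray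

variable {E F : Type*} [NormedAddCommGroup E] [NormedSpace ℝ E]
  [NormedAddCommGroup F] [NormedSpace ℝ F]

theorem hasDerivAt_comp_sub_smul {f : E → F} {x v : E} {t : ℝ}
    (hf : DifferentiableAt ℝ f (x - t • v)) :
    HasDerivAt (fun s : ℝ => f (x - s • v)) (fderiv ℝ f (x - t • v) (-v)) t := by
  have hray : HasDerivAt (fun s : ℝ => x - s • v) (-v) t := by
    simpa using ((hasDerivAt_id t).smul_const v).const_sub x
  exact hf.hasFDerivAt.comp_hasDerivAt t hray

theorem norm_sub_le_gronwallBound_of_norm_fderiv_le {f : E → F} {L₀ L₁ : ℝ} (hL₁ : 0 ≤ L₁)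
    (hf : Differentiable ℝ f) (hsmooth : ∀ y, ‖fderiv ℝ f y‖ ≤ L₀ + L₁ * ‖f y‖)
    (x v : E) {t : ℝ} (ht : 0 ≤ t) :
    ‖f (x - t • v) - f x‖ ≤ gronwallBound 0 (L₁ * ‖v‖) (‖v‖ * (L₀ + L₁ * ‖f x‖)) t := by
  have hderiv (s : ℝ) : HasDerivAt (fun s : ℝ => f (x - s • v) - f x)
      (fderiv ℝ f (x - s • v) (-v)) s :=
    (hasDerivAt_comp_sub_smul (hf _)).sub_const _
  have hbound (s : ℝ) : ‖fderiv ℝ f (x - s • v) (-v)‖ ≤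
      L₁ * ‖v‖ * ‖f (x - s • v) - f x‖ + ‖v‖ * (L₀ + L₁ * ‖f x‖) := by
    have htri : ‖f (x - s • v)‖ ≤ ‖f (x - s • v) - f x‖ + ‖f x‖ := norm_le_norm_sub_add _ _
    calc ‖fderiv ℝ f (x - s • v) (-v)‖ ≤ ‖fderiv ℝ f (x - s • v)‖ * ‖v‖ := by
          simpa using (fderiv ℝ f (x - s • v)).le_opNorm (-v)
      _ ≤ (L₀ + L₁ * ‖f (x - s • v)‖) * ‖v‖ := by gcongr; exact hsmooth _
      _ ≤ _ := by nlinarith [mul_nonneg (mul_nonneg hL₁ (norm_nonneg v)) (sub_nonneg.2 htri)]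
  simpa using norm_le_gronwallBound_of_norm_deriv_right_le (a := 0) (b := t) (δ := 0)
    (fun s _ => (hderiv s).continuousAt.continuousWithinAt) (fun s _ => (hderiv s).hasDerivWithinAt)
    (by simp) (fun s _ => hbound s) t (right_mem_Icc.2 ht)

end Ray

theorem gronwallBound_zero_le_of_le_log {K ε c t : ℝ} (hK : 0 < K) (hε : 0 < ε) (hc : 0 ≤ c)
    (ht : t ≤ log (1 + K * c / ε) / K) : gronwallBound 0 K ε t ≤ c := by
  have hexp : exp (K * t) ≤ 1 + K * c / ε := by
    rw [← exp_log (by positivity : 0 < 1 + K * c / ε)]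
    exact exp_le_exp.2 (by rwa [le_div_iff₀ hK, mul_comm] at ht)
  calc gronwallBound 0 K ε t = ε / K * (exp (K * t) - 1) := by
        simp [gronwallBound_of_K_ne_0 hK.ne']
    _ ≤ ε / K * (K * c / ε) := by gcongr; linarith
    _ = c := by field_simp

section Gradient

variable {E : Type*} [NormedAddCommGroup E] [InnerProductSpace ℝ E]

theorem mul_norm_sq_le_inner_of_norm_sub_le {u g : E} {c : ℝ} (h : ‖u - g‖ ≤ c * ‖g‖) :
    (1 - c) * ‖g‖ ^ 2 ≤ ⟪u, g⟫ := by
  have hsplit : ⟪u, g⟫ = ‖g‖ ^ 2 + ⟪u - g, g⟫ := by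
    rw [inner_sub_left, real_inner_self_eq_norm_sq]; ring
  have hcs : -(‖u - g‖ * ‖g‖) ≤ ⟪u - g, g⟫ := (abs_le.1 (abs_real_inner_le_norm _ _)).1
  nlinarith [mul_le_mul_of_nonneg_right h (norm_nonneg g)]

variable [CompleteSpace E]

theorem ContDiff.gradient {R : E → ℝ} {n : WithTop ℕ∞} (hR : ContDiff ℝ (n + 1) R) :
    ContDiff ℝ n (gradient R) :=
  (toDual ℝ E).symm.contDiff.comp (hR.fderiv_right le_rfl)

theorem sub_le_of_le_inner_gradient {R : E → ℝ} (hR : Differentiable ℝ R) {x v : E} {η m : ℝ}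
    (hη : 0 ≤ η) (h : ∀ t ∈ Ioo 0 η, m ≤ ⟪gradient R (x - t • v), v⟫) :
    R (x - η • v) - R x ≤ -m * η := by
  have hderiv (t : ℝ) :
      HasDerivAt (fun t : ℝ => R (x - t • v)) (-⟪gradient R (x - t • v), v⟫) t := by
    simpa using hasDerivAt_comp_sub_smul (hR (x - t • v))
  have hslope (t : ℝ) (ht : t ∈ interior (Icc 0 η)) :
      deriv (fun t : ℝ => R (x - t • v)) t ≤ -m := by
    rw [interior_Icc] at ht
    rw [(hderiv t).deriv]
    linarith [h t ht]
  simpa using (convex_Icc 0 η).image_sub_le_mul_sub_of_deriv_le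
    (fun t _ => (hderiv t).continuousAt.continuousWithinAt)
    (fun t _ => (hderiv t).differentiableAt.differentiableWithinAt) hslope
    0 (left_mem_Icc.2 hη) η (right_mem_Icc.2 hη) hη

end Gradient

theorem stmt_3 {N : ℕ} (R : EuclideanSpace ℝ (Fin N) → ℝ) (L₀ L₁ lam : ℝ)
    (hR : ContDiff ℝ 2 R) (hL₀ : 0 < L₀) (hL₁ : 0 < L₁)
    (hlam : lam ∈ Set.Ioo (0 : ℝ) 1)
    (hsmooth : ∀ θ : EuclideanSpace ℝ (Fin N),
      ‖fderiv ℝ (gradient R) θ‖ ≤ L₀ + L₁ * ‖gradient R θ‖)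
    (θ : EuclideanSpace ℝ (Fin N)) (hθ : gradient R θ ≠ 0) (η : ℝ) (hη : 0 < η)
    (hη' : η ≤ (1 / (L₁ * ‖gradient R θ‖)) *
      Real.log ((L₀ + L₁ * (2 - lam) * ‖gradient R θ‖) / (L₀ + L₁ * ‖gradient R θ‖))) :
    R (θ - η • gradient R θ) - R θ ≤ -lam * η * ‖gradient R θ‖ ^ 2 := by
  set g := gradient R θ
  have hg : 0 < ‖g‖ := norm_pos_iff.2 hθ
  have hgrad : Differentiable ℝ (gradient R) := (hR.gradient (n := 1)).differentiable one_ne_zero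
  have hstep : (1 / (L₁ * ‖g‖)) * log ((L₀ + L₁ * (2 - lam) * ‖g‖) / (L₀ + L₁ * ‖g‖)) =
      log (1 + L₁ * ‖g‖ * ((1 - lam) * ‖g‖) / (‖g‖ * (L₀ + L₁ * ‖g‖))) / (L₁ * ‖g‖) := by
    rw [one_div_mul_eq_div]
    congr 2
    field_simp
    ring
  have hclose : ∀ t ∈ Ioo 0 η, ‖gradient R (θ - t • g) - g‖ ≤ (1 - lam) * ‖g‖ := fun t ht =>
    (norm_sub_le_gronwallBound_of_norm_fderiv_le hL₁.le hgrad hsmooth θ g ht.1.le).trans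
      (gronwallBound_zero_le_of_le_log (by positivity) (by positivity)
        (mul_nonneg (sub_nonneg.2 hlam.2.le) hg.le) (by linarith [ht.2]))
  calc R (θ - η • g) - R θ ≤ -((1 - (1 - lam)) * ‖g‖ ^ 2) * η :=
        sub_le_of_le_inner_gradient (hR.differentiable two_ne_zero) hη.le
          fun t ht => mul_norm_sq_le_inner_of_norm_sub_le (hclose t ht)
    _ = -lam * η * ‖g‖ ^ 2 := by ring
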